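/- arXiv:1911.05834 — 4 statements merged into one kernel-verified Lean document; each statement's English description precedes it below -/
import Mathlib

section
/- Let τ = {nop, inp, free} or τ = {nop, inp, used, free}. An initialized TS A that is a simple directed path s₀ --e₁--> s₁ --e₂--> ⋯ --eₙ--> sₙ on pairwise distinct states s₀, …, sₙ is τ-solvable (has both the τ-SSP and the τ-ESSP) if and only if the events e₁, …, eₙ are pairwise distinct. -/
/-- The eight Boolean interactions. -/
inductive Interaction : Type
  | nop | inp | out | set | res | swap | used | free
  deriving DecidableEq

/-- An interaction as a partial function on `Bool` (`0 = false`, `1 = true`). -/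
def Interaction.app : Interaction → Bool → Option Bool
  | .nop, x => some x
  | .inp, x => if x then some false else none
  | .out, x => if x then none else some true
  | .set, _ => some true
  | .res, _ => some false
  | .swap, x => some (!x)
  | .used, x => if x then some true else none
  | .free, x => if x then none else some false

/-- A transition system with states `S`, events `E` and a partial transition function. -/
structure TS (S E : Type) where
  delta : S → E → Option S

/-- The one-step reachability relation of a TS. -/
def TS.step {S E : Type} (A : TS S E) (s s' : S) : Prop :=
  ∃ e, A.delta s e = some s'

/-- A `τ`-region of a TS `A`. -/
structure Region {S E : Type} (A : TS S E) (τ : Set Interaction) where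
  sup : S → Bool
  sig : E → Interaction
  sig_mem : ∀ e, sig e ∈ τ
  consistent : ∀ s e s', A.delta s e = some s' → (sig e).app (sup s) = some (sup s')

/-- `A` has the `τ`-state-separation property. -/
def TS.hasSSP {S E : Type} (A : TS S E) (τ : Set Interaction) : Prop :=
  ∀ s s' : S, s ≠ s' → ∃ R : Region A τ, R.sup s ≠ R.sup s'

/-- `A` has the `τ`-event-state-separation property. -/
def TS.hasESSP {S E : Type} (A : TS S E) (τ : Set Interaction) : Prop :=
  ∀ (e : E) (s : S), A.delta s e = none → ∃ R : Region A τ, (R.sig e).app (R.sup s) = none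

/-- A TS together with an initial state. -/
structure InitTS (S E : Type) extends TS S E where
  init : S

/-- The TS that is a simple directed path `s₀ --f 0--> s₁ --f 1--> ⋯ --f (n-1)--> sₙ`
on the pairwise distinct states `0, …, n : Fin (n+1)`, with initial state `0`. -/
def pathTS {E : Type} [DecidableEq E] (n : ℕ) (f : Fin n → E) : InitTS (Fin (n + 1)) E where
  delta := fun s a =>
    if h : ∃ j : Fin n, (j : ℕ) = (s : ℕ) ∧ f j = a then
      some ⟨(s : ℕ) + 1, by
        obtain ⟨j, hj, -⟩ := h
        have := j.isLt
        omega⟩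
    else none
  init := 0

/-! Over `{nop, inp, used, free}` no interaction turns `0` into `1`, so the support of every
region is antitone along the path. A region separating `sᵢ₋₁` from `sᵢ` therefore drops from `1`
to `0` at `eᵢ`, which forces `sig eᵢ = inp`; a later occurrence of `eᵢ` would then meet `inp` at
support `0`. Conversely, if the events are distinct, the cut regions with support
`{s₀, …, s_{m-1}}`, signature `inp` on the event crossing the cut, `nop` on the events before it and
`free` on those after it, solve every SSP and ESSP atom. -/

namespace Interaction

lemma le_of_app_eq_some {i : Interaction} (hi : i ∈ ({nop, inp, used, free} : Set Interaction))
    {b b' : Bool} (h : i.app b = some b') : b' ≤ b := by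
  rcases hi with rfl | rfl | rfl | rfl <;> cases b <;> simp_all [app]

lemma eq_inp_of_app_true_eq_some_false {i : Interaction}
    (hi : i ∈ ({nop, inp, used, free} : Set Interaction)) (h : i.app true = some false) :
    i = inp := by
  rcases hi with rfl | rfl | rfl | rfl <;> simp_all [app]

end Interaction

section PathTS

open Interaction

variable {E : Type} [DecidableEq E] {n : ℕ} {f : Fin n → E} {τ : Set Interaction}

lemma pathTS_delta_eq_some_iff {s s' : Fin (n + 1)} {a : E} :
    (pathTS n f).delta s a = some s' ↔ ∃ j, f j = a ∧ s = j.castSucc ∧ s' = j.succ := by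
  simp only [pathTS]
  split_ifs with h
  · obtain ⟨j, hjs, rfl⟩ := h
    simp only [Option.some_inj]
    constructor
    · rintro rfl
      exact ⟨j, rfl, Fin.ext hjs.symm, Fin.ext (by simp [hjs])⟩
    · rintro ⟨i, hi, rfl, rfl⟩
      ext
      simp
  · simp only [false_iff, not_exists, not_and]
    rintro j rfl rfl -
    exact h ⟨j, rfl, rfl⟩

lemma pathTS_delta_castSucc (j : Fin n) : (pathTS n f).delta j.castSucc (f j) = some j.succ :=
  pathTS_delta_eq_some_iff.2 ⟨j, rfl, rfl, rfl⟩

namespace Region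

lemma app_sup_castSucc (R : Region (pathTS n f).toTS τ) (j : Fin n) :
    (R.sig (f j)).app (R.sup j.castSucc) = some (R.sup j.succ) :=
  R.consistent _ _ _ (pathTS_delta_castSucc j)

lemma sup_antitone (hτ : τ ⊆ {nop, inp, used, free}) (R : Region (pathTS n f).toTS τ) :
    Antitone R.sup :=
  Fin.antitone_iff_succ_le.2 fun j ↦
    le_of_app_eq_some (hτ (R.sig_mem _)) (R.app_sup_castSucc j)

end Region

theorem injective_of_hasSSP (hτ : τ ⊆ {nop, inp, used, free})
    (hSSP : (pathTS n f).toTS.hasSSP τ) : Function.Injective f := by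
  refine Function.Injective.of_lt_imp_ne fun i j hij hfij ↦ ?_
  obtain ⟨R, hR⟩ := hSSP i.castSucc i.succ Fin.castSucc_lt_succ.ne
  have hdrop : R.sup i.castSucc = true ∧ R.sup i.succ = false := by
    have : R.sup i.succ ≤ R.sup i.castSucc := R.sup_antitone hτ Fin.castSucc_lt_succ.le
    revert hR this
    cases R.sup i.castSucc <;> cases R.sup i.succ <;> simp
  have hinp : R.sig (f i) = inp := eq_inp_of_app_true_eq_some_false (hτ (R.sig_mem _))
    (hdrop.1 ▸ hdrop.2 ▸ R.app_sup_castSucc i)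
  have hj : R.sup j.castSucc = false :=
    le_antisymm (hdrop.2 ▸ R.sup_antitone hτ (Fin.succ_le_castSucc_iff.2 hij)) (Bool.false_le _)
  have := R.app_sup_castSucc j
  rw [← hfij, hinp, hj] at this
  simp [app] at this

/-- Events that do not occur on the path get index `n + 1`, beyond every state. -/
noncomputable def eventIndex (f : Fin n → E) (e : E) : ℕ :=
  if h : ∃ j, f j = e then h.choose else n + 1

lemma eventIndex_apply (hf : Function.Injective f) (j : Fin n) : eventIndex f (f j) = j := by
  have h : ∃ i, f i = f j := ⟨j, rfl⟩
  rw [eventIndex, dif_pos h, hf h.choose_spec]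

lemma eventIndex_ne_of_delta_eq_none (hf : Function.Injective f) {s : Fin (n + 1)} {e : E}
    (h : (pathTS n f).delta s e = none) : eventIndex f e ≠ s := by
  intro hs
  by_cases he : ∃ j, f j = e
  · obtain ⟨j, rfl⟩ := he
    have hjs : j.castSucc = s := Fin.ext (by rw [← hs, eventIndex_apply hf, Fin.val_castSucc])
    rw [← hjs, pathTS_delta_castSucc] at h
    exact Option.some_ne_none _ h
  · rw [eventIndex, dif_neg he] at hs
    omega

noncomputable def cutRegion (hτ : {nop, inp, free} ⊆ τ) (hf : Function.Injective f) (m : ℕ) :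
    Region (pathTS n f).toTS τ where
  sup t := decide (t.val < m)
  sig e := if eventIndex f e + 1 < m then nop else if eventIndex f e + 1 = m then inp else free
  sig_mem e := by split_ifs <;> apply hτ <;> simp
  consistent s e s' h := by
    obtain ⟨j, rfl, rfl, rfl⟩ := pathTS_delta_eq_some_iff.1 h
    simp only [eventIndex_apply hf, Fin.val_castSucc, Fin.val_succ]
    split_ifs <;> grind [app]

lemma cutRegion_sup_apply (hτ : {nop, inp, free} ⊆ τ) (hf : Function.Injective f) (m : ℕ)
    (t : Fin (n + 1)) : (cutRegion hτ hf m).sup t = decide (t.val < m) :=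
  rfl

lemma cutRegion_sig_eq_inp (hτ : {nop, inp, free} ⊆ τ) (hf : Function.Injective f) {e : E} :
    (cutRegion hτ hf (eventIndex f e + 1)).sig e = inp := by
  simp [cutRegion]

lemma cutRegion_sig_eq_free (hτ : {nop, inp, free} ⊆ τ) (hf : Function.Injective f) {e : E} :
    (cutRegion hτ hf (eventIndex f e)).sig e = free := by
  simp [cutRegion]

theorem hasSSP_of_injective (hτ : {nop, inp, free} ⊆ τ) (hf : Function.Injective f) :
    (pathTS n f).toTS.hasSSP τ := by
  intro s s' hne
  wlog hlt : s < s' generalizing s s'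
  · obtain ⟨R, hR⟩ := this s' s hne.symm (hne.lt_or_gt.resolve_left hlt)
    exact ⟨R, hR.symm⟩
  refine ⟨cutRegion hτ hf (s + 1), ?_⟩
  have : (s : ℕ) < s' := hlt
  simp only [cutRegion_sup_apply, ne_eq, decide_eq_decide]
  omega

theorem hasESSP_of_injective (hτ : {nop, inp, free} ⊆ τ) (hf : Function.Injective f) :
    (pathTS n f).toTS.hasESSP τ := by
  intro e s h
  rcases (eventIndex_ne_of_delta_eq_none hf h).lt_or_gt with hlt | hgt
  · refine ⟨cutRegion hτ hf (eventIndex f e + 1), ?_⟩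
    rw [cutRegion_sig_eq_inp, cutRegion_sup_apply, decide_eq_false (by omega)]
    rfl
  · refine ⟨cutRegion hτ hf (eventIndex f e), ?_⟩
    rw [cutRegion_sig_eq_free, cutRegion_sup_apply, decide_eq_true hgt]
    rfl

end PathTS

/-- For `τ = {nop, inp, free}` or `τ = {nop, inp, used, free}`, a simple
directed path TS is `τ`-solvable (has the `τ`-SSP and the `τ`-ESSP) if and only if its
events are pairwise distinct. -/
theorem path_solvable_iff_distinct_events {E : Type} [DecidableEq E]
    (τ : Set Interaction)
    (hτ : τ = ({Interaction.nop, Interaction.inp, Interaction.free} : Set Interaction) ∨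
          τ = ({Interaction.nop, Interaction.inp, Interaction.used, Interaction.free} :
            Set Interaction))
    (n : ℕ) (f : Fin n → E) :
    ((pathTS n f).toTS.hasSSP τ ∧ (pathTS n f).toTS.hasESSP τ) ↔ Function.Injective f := by
  have hsub : ({.nop, .inp, .free} : Set Interaction) ⊆ {.nop, .inp, .used, .free} :=
    Set.insert_subset_insert (Set.insert_subset_insert (Set.subset_insert _ _))
  have hτ' : {.nop, .inp, .free} ⊆ τ ∧ τ ⊆ {.nop, .inp, .used, .free} := by
    rcases hτ with rfl | rfl
    exacts [⟨subset_rfl, hsub⟩, ⟨hsub, subset_rfl⟩]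
  exact ⟨fun h ↦ injective_of_hasSSP hτ'.2 h.1,
    fun hf ↦ ⟨hasSSP_of_injective hτ'.1 hf, hasESSP_of_injective hτ'.1 hf⟩⟩
end

section
/- Let τ ⊆ {nop, inp, used}. If an initialized TS A, in which every event occurs on at least one transition, has the τ-ESSP, then every event of A occurs at the initial state s₀. -/
/-- For `τ ⊆ {nop, inp, used}`: if an initialized TS `A` (every state
reachable from the initial state) in which every event occurs on at least one transition
has the `τ`-ESSP, then every event occurs at the initial state. -/
theorem essp_all_events_at_init {S E : Type} (τ : Set Interaction)
    (hτ : τ ⊆ ({Interaction.nop, Interaction.inp, Interaction.used} : Set Interaction))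
    (A : InitTS S E)
    (hreach : ∀ s, Relation.ReflTransGen A.toTS.step A.init s)
    (hocc : ∀ e : E, ∃ s s', A.delta s e = some s')
    (h : A.toTS.hasESSP τ) :
    ∀ e : E, ∃ s', A.delta A.init e = some s' := by
  intro e
  cases hd : A.delta A.init e with
  | some s' => exact ⟨s', rfl⟩
  | none =>
    exfalso
    obtain ⟨R, hR⟩ := h e A.init hd
    -- sup init = false, and sig e is inp or used
    have hsig := hτ (R.sig_mem e)
    simp only [Set.mem_insert_iff, Set.mem_singleton_iff] at hsig
    have hinit : R.sup A.init = false := by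
      rcases hsig with h1 | h1 | h1 <;>
        rw [h1] at hR <;>
        simp [Interaction.app] at hR ⊢ <;>
        revert hR <;> cases hv : R.sup A.init <;> simp
    -- sup stays false along reachable states
    have hfalse : ∀ s, Relation.ReflTransGen A.toTS.step A.init s → R.sup s = false := by
      intro s hs
      induction hs with
      | refl => exact hinit
      | tail _ hstep ih =>
        obtain ⟨e', he'⟩ := hstep
        have hc := R.consistent _ _ _ he'
        have hsig' := hτ (R.sig_mem e')
        simp only [Set.mem_insert_iff, Set.mem_singleton_iff] at hsig'
        rcases hsig' with h1 | h1 | h1 <;>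
          rw [h1] at hc <;> rw [ih] at hc <;>
          simp [Interaction.app] at hc <;> simp [hc]
    obtain ⟨s, s', hss⟩ := hocc e
    have hc := R.consistent _ _ _ hss
    have hsf := hfalse s (hreach s)
    rw [hsf] at hc
    rcases hsig with h1 | h1 | h1 <;>
      rw [h1] at hc hR <;>
      simp [Interaction.app, hinit] at hc hR
end

section
/- Let τ = {nop, inp, set}. Let A = s₀ --e₁--> ⋯ --eₘ--> sₘ be an initialized TS that is a simple directed path on pairwise distinct states, and let its cycle extension A_c be obtained from A by adding a fresh event ⊕ ∉ E(A) and the transition sₘ --⊕--> s₀. Then an SSP atom (s, s') of A is solvable by a τ-region of A if and only if it is solvable by a τ-region of A_c, and an ESSP atom (e, s) of A with e ∈ E(A) is solvable by a τ-region of A if and only if it is solvable by a τ-region of A_c. -/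
/-- The cycle extension `A_c` of the path: the events are `Option E`, where `some e`
labels the original path edges and the fresh event `⊕ = none` closes the cycle via
`sₙ --⊕--> s₀`. -/
def cycleExt {E : Type} [DecidableEq E] (n : ℕ) (f : Fin n → E) :
    InitTS (Fin (n + 1)) (Option E) where
  delta := fun s a =>
    match a with
    | some e => (pathTS n f).delta s e
    | none => if (s : ℕ) = n then some 0 else none
  init := 0

def mkSig (b b' : Bool) : Interaction :=
  if b = b' then .nop else if b then .inp else .set

lemma mkSig_mem (b b' : Bool) :
    mkSig b b' ∈ ({Interaction.nop, Interaction.inp, Interaction.set} : Set Interaction) := by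
  cases b <;> cases b' <;> simp [mkSig]

lemma mkSig_app (b b' : Bool) : (mkSig b b').app b = some b' := by
  cases b <;> cases b' <;> rfl

def restrictRegion {E : Type} [DecidableEq E] (n : ℕ) (f : Fin n → E)
    (R : Region (cycleExt n f).toTS
      ({Interaction.nop, Interaction.inp, Interaction.set} : Set Interaction)) :
    Region (pathTS n f).toTS
      ({Interaction.nop, Interaction.inp, Interaction.set} : Set Interaction) where
  sup := R.sup
  sig := fun e => R.sig (some e)
  sig_mem := fun e => R.sig_mem _
  consistent := fun s e s' h => R.consistent s (some e) s' h

def extendRegion {E : Type} [DecidableEq E] (n : ℕ) (f : Fin n → E)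
    (R : Region (pathTS n f).toTS
      ({Interaction.nop, Interaction.inp, Interaction.set} : Set Interaction)) :
    Region (cycleExt n f).toTS
      ({Interaction.nop, Interaction.inp, Interaction.set} : Set Interaction) where
  sup := R.sup
  sig := fun a => match a with
    | some e => R.sig e
    | none => mkSig (R.sup (Fin.last n)) (R.sup 0)
  sig_mem := fun a => match a with
    | some e => R.sig_mem e
    | none => mkSig_mem _ _
  consistent := fun s a s' h => by
    match a with
    | some e => exact R.consistent s e s' h
    | none =>
      simp only [cycleExt] at h
      split at h
      · rename_i hs
        have hs1 : s = Fin.last n := Fin.ext (by simpa using hs)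
        have hs2 : s' = 0 := (Option.some.inj h).symm
        subst hs1; subst hs2
        exact mkSig_app _ _
      · exact absurd h (by simp)

/-- For `τ = {nop, inp, set}`: an SSP atom of the path TS `A` is solvable by
a `τ`-region of `A` iff it is solvable by a `τ`-region of the cycle extension `A_c`, and
likewise for every ESSP atom `(e, s)` of `A` with `e ∈ E(A)`. -/
theorem cycle_extension_equisolvable {E : Type} [DecidableEq E] (n : ℕ) (f : Fin n → E) :
    (∀ s s' : Fin (n + 1), s ≠ s' →
      ((∃ R : Region (pathTS n f).toTS
          ({Interaction.nop, Interaction.inp, Interaction.set} : Set Interaction),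
          R.sup s ≠ R.sup s') ↔
        (∃ R : Region (cycleExt n f).toTS
          ({Interaction.nop, Interaction.inp, Interaction.set} : Set Interaction),
          R.sup s ≠ R.sup s'))) ∧
    (∀ (e : E) (s : Fin (n + 1)), (pathTS n f).delta s e = none →
      ((∃ R : Region (pathTS n f).toTS
          ({Interaction.nop, Interaction.inp, Interaction.set} : Set Interaction),
          (R.sig e).app (R.sup s) = none) ↔
        (∃ R : Region (cycleExt n f).toTS
          ({Interaction.nop, Interaction.inp, Interaction.set} : Set Interaction),
          (R.sig (some e)).app (R.sup s) = none))) := by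
  constructor
  · intro s s' _
    constructor
    · rintro ⟨R, hR⟩
      exact ⟨extendRegion n f R, hR⟩
    · rintro ⟨R, hR⟩
      exact ⟨restrictRegion n f R, hR⟩
  · intro e s _
    constructor
    · rintro ⟨R, hR⟩
      exact ⟨extendRegion n f R, hR⟩
    · rintro ⟨R, hR⟩
      exact ⟨restrictRegion n f R, hR⟩
end

section
/- Let τ = {nop, inp, set} and let A be a 1-bounded initialized TS. If an ESSP atom (k, s) of A is solvable by some τ-region, then it is solvable by a τ-region (sup, sig) in which at most two events e satisfy sig(e) = inp. -/
/-- `A` is `g`-bounded: every state has at most `g` incoming and at most `g` outgoing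
transitions. -/
def InitTS.gBounded {S E : Type} (A : InitTS S E) (g : ℕ) : Prop :=
  ∀ s : S,
    {p : S × E | A.delta p.1 p.2 = some s}.ncard ≤ g ∧
    {e : E | ∃ s', A.delta s e = some s'}.ncard ≤ g

namespace TwoInpAux

variable {S E : Type}

/-- A step between two states whose support is `false`. -/
def zstep (A : TS S E) (sup : S → Bool) (u v : S) : Prop :=
  (∃ e, A.delta u e = some v) ∧ sup u = false ∧ sup v = false

/-- A path through states of support `false`. -/
def zpath (A : TS S E) (sup : S → Bool) : S → S → Prop :=
  Relation.ReflTransGen (zstep A sup)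

/-- The event `e` has a transition from a `true` state into the zero-zone of `t`. -/
def dropTo (A : TS S E) (sup : S → Bool) (e : E) (t : S) : Prop :=
  ∃ a u, A.delta a e = some u ∧ sup a = true ∧ sup u = false ∧ zpath A sup u t

/-- Incoming uniqueness: in a TS with in-degree at most one, the drop event reaching a
given state through a zero path is unique. -/
theorem dropTo_unique (A : TS S E) (sup : S → Bool)
    (hin : ∀ t : S, ∀ p q : S × E,
      A.delta p.1 p.2 = some t → A.delta q.1 q.2 = some t → p = q)
    {e e' : E} {t : S} (h1 : dropTo A sup e t) (h2 : dropTo A sup e' t) : e = e' := by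
  obtain ⟨a, u, hae, ha, hu, hp⟩ := h1
  induction hp with
  | refl =>
      obtain ⟨a', u', hae', ha', hu', hp'⟩ := h2
      cases hp' with
      | refl =>
          have hpq := hin u (a, e) (a', e') hae hae'
          exact congrArg Prod.snd hpq
      | tail hp'' hs =>
          obtain ⟨⟨ev, hev⟩, hvF, _⟩ := hs
          have hpq := hin u (a, e) (_, ev) hae hev
          have : a = _ := congrArg Prod.fst hpq
          rw [this] at ha
          rw [ha] at hvF
          exact absurd hvF (by simp)
  | tail hp hs ih =>
      rename_i b t'
      obtain ⟨a', u', hae', ha', hu', hp'⟩ := h2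
      cases hp' with
      | refl =>
          obtain ⟨⟨eb, heb⟩, hbF, _⟩ := hs
          have hpq := hin t' (a', e') (b, eb) hae' heb
          have : a' = b := congrArg Prod.fst hpq
          rw [this] at ha'
          rw [ha'] at hbF
          exact absurd hbF (by simp)
      | tail hp'' hs' =>
          rename_i v
          obtain ⟨⟨ev, hev⟩, hvF, _⟩ := hs'
          obtain ⟨⟨eb, heb⟩, hbF, _⟩ := hs
          have hpq := hin t' (v, ev) (b, eb) hev heb
          have hvb : v = b := congrArg Prod.fst hpq
          exact ih ⟨a', u', hae', ha', hu', hvb ▸ hp''⟩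

/-- Pulling a `dropTo` back along a zero transition. -/
theorem dropTo_back (A : TS S E) (sup : S → Bool)
    (hin : ∀ t : S, ∀ p q : S × E,
      A.delta p.1 p.2 = some t → A.delta q.1 q.2 = some t → p = q)
    {a b : S} {e e₀ : E} (hab : A.delta a e = some b) (haF : sup a = false)
    (h : dropTo A sup e₀ b) : dropTo A sup e₀ a := by
  obtain ⟨a', u', h1, h2, h3, hp⟩ := h
  cases hp with
  | refl =>
      have hpq := hin b (a', e₀) (a, e) h1 hab
      have : a' = a := congrArg Prod.fst hpq
      rw [this] at h2
      rw [h2] at haF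
      exact absurd haF (by simp)
  | tail hp' hs =>
      rename_i v
      obtain ⟨⟨ev, hev⟩, hvF, _⟩ := hs
      have hpq := hin b (v, ev) (a, e) hev hab
      have hva : v = a := congrArg Prod.fst hpq
      exact ⟨a', u', h1, h2, h3, hva ▸ hp'⟩

end TwoInpAux

open TwoInpAux in
/-- For `τ = {nop, inp, set}` and a `1`-bounded initialized TS `A`: if an
ESSP atom `(k, s)` of `A` is solvable by some `τ`-region, then it is solvable by a
`τ`-region in which at most two events have signature `inp`. -/
theorem solvable_with_two_inp {S E : Type} [Fintype S] [Fintype E]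
    (A : InitTS S E)
    (hreach : ∀ s, Relation.ReflTransGen A.toTS.step A.init s)
    (hb : A.gBounded 1) (k : E) (s : S) (hatom : A.delta s k = none)
    (h : ∃ R : Region A.toTS
        ({Interaction.nop, Interaction.inp, Interaction.set} : Set Interaction),
      (R.sig k).app (R.sup s) = none) :
    ∃ R : Region A.toTS
        ({Interaction.nop, Interaction.inp, Interaction.set} : Set Interaction),
      (R.sig k).app (R.sup s) = none ∧
      {e : E | R.sig e = Interaction.inp}.ncard ≤ 2 := by
  classical
  obtain ⟨R, hR⟩ := h
  -- incoming-pair uniqueness from 1-boundedness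
  have hin : ∀ t : S, ∀ p q : S × E,
      A.toTS.delta p.1 p.2 = some t → A.toTS.delta q.1 q.2 = some t → p = q := by
    intro t p q hp hq
    have h1 := (hb t).1
    have hfin : {p : S × E | A.delta p.1 p.2 = some t}.Finite := Set.toFinite _
    exact (Set.ncard_le_one hfin).1 h1 p hp q hq
  -- the signature of k is inp, and sup s = false
  have hk : R.sig k = Interaction.inp := by
    rcases R.sig_mem k with h1 | h1 | h1
    · exfalso; rw [h1] at hR; simp [Interaction.app] at hR
    · exact h1
    · exfalso
      rw [Set.mem_singleton_iff] at h1
      rw [h1] at hR; simp [Interaction.app] at hR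
  have hs0 : R.sup s = false := by
    cases hsup : R.sup s with
    | false => rfl
    | true => rw [hk, hsup] at hR; simp [Interaction.app] at hR
  -- any event with a (true → false) transition has signature inp
  have hdrop_inp : ∀ e : E, dropTo A.toTS R.sup e s → R.sig e = Interaction.inp := by
    intro e ⟨a, u, hae, ha, hu, _⟩
    have hc := R.consistent a e u hae
    rcases R.sig_mem e with h1 | h1 | h1
    · rw [h1, ha, hu] at hc; simp [Interaction.app] at hc
    · exact h1
    · rw [Set.mem_singleton_iff] at h1
      rw [h1, ha, hu] at hc; simp [Interaction.app] at hc
  -- the guard event of s's zero-zone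
  set fstar : E := if hex : ∃ e, dropTo A.toTS R.sup e s then hex.choose else k with hfdef
  have hfs : ∀ e, dropTo A.toTS R.sup e s → e = fstar := by
    intro e he
    have hex : ∃ e, dropTo A.toTS R.sup e s := ⟨e, he⟩
    have : fstar = hex.choose := by rw [hfdef, dif_pos hex]
    rw [this]
    exact dropTo_unique A.toTS R.sup hin he hex.choose_spec
  have hfstar_sig : fstar = k ∨ R.sig fstar = Interaction.inp := by
    by_cases hex : ∃ e, dropTo A.toTS R.sup e s
    · right
      have : fstar = hex.choose := by rw [hfdef, dif_pos hex]
      rw [this]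
      exact hdrop_inp _ hex.choose_spec
    · left; rw [hfdef, dif_neg hex]
  -- the fill predicate
  set Fill : S → Prop :=
    fun t => ∃ e, e ≠ k ∧ e ≠ fstar ∧ dropTo A.toTS R.sup e t with hFdef
  set sup' : S → Bool := fun t => R.sup t || decide (Fill t) with hsup'
  set sig' : E → Interaction := fun e =>
    if e = k ∨ e = fstar then Interaction.inp
    else if R.sig e = Interaction.inp then Interaction.nop else R.sig e with hsig'
  have hnk : ∀ e : E, R.sig e ≠ Interaction.inp → ¬(e = k ∨ e = fstar) := by
    intro e hne hor
    rcases hor with rfl | rfl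
    · exact hne hk
    · rcases hfstar_sig with h1 | h1
      · rw [h1] at hne; exact hne hk
      · exact hne h1
  -- the new region
  refine ⟨⟨sup', sig', ?_, ?_⟩, ?_, ?_⟩
  · intro e
    rw [hsig']
    by_cases h1 : e = k ∨ e = fstar
    · simp [h1]
    · by_cases h2 : R.sig e = Interaction.inp
      · simp [h1, h2]
      · simpa [h1, h2] using R.sig_mem e
  · -- consistency
    intro a e b hab
    have hc := R.consistent a e b hab
    rcases R.sig_mem e with h1 | h1 | h1
    · -- nop
      have hne := hnk e (by rw [h1]; simp)
      have hab' : R.sup a = R.sup b := by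
        rw [h1] at hc; simpa [Interaction.app] using hc
      have hsig_e : sig' e = Interaction.nop := by
        simp only [hsig']
        rw [if_neg hne, if_neg (by rw [h1]; simp)]
        exact h1
      rw [hsig_e]
      cases hsa : R.sup a with
      | true =>
          have hsb : R.sup b = true := by rw [← hab', hsa]
          simp [hsup', Interaction.app, hsa, hsb]
      | false =>
          have hsb : R.sup b = false := by rw [← hab', hsa]
          have hiff : Fill a ↔ Fill b := by
            constructor
            · rintro ⟨e₀, he1, he2, ha₀, u₀, hd1, hd2, hd3, hp⟩
              exact ⟨e₀, he1, he2, ha₀, u₀, hd1, hd2, hd3,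
                hp.tail ⟨⟨e, hab⟩, hsa, hsb⟩⟩
            · rintro ⟨e₀, he1, he2, hd⟩
              exact ⟨e₀, he1, he2, dropTo_back A.toTS R.sup hin hab hsa hd⟩
          simp [hsup', Interaction.app, hsa, hsb, hiff]
    · -- inp
      have hsa : R.sup a = true := by
        cases hsa : R.sup a with
        | true => rfl
        | false => rw [h1, hsa] at hc; simp [Interaction.app] at hc
      have hsb : R.sup b = false := by
        rw [h1, hsa] at hc; simpa [Interaction.app] using hc.symm
      by_cases hor : e = k ∨ e = fstar
      · have hsig_e : sig' e = Interaction.inp := by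
          simp only [hsig']; rw [if_pos hor]
        have hnofill : ¬ Fill b := by
          rintro ⟨e₀, he1, he2, hd⟩
          have : e₀ = e := dropTo_unique A.toTS R.sup hin hd
            ⟨a, b, hab, hsa, hsb, Relation.ReflTransGen.refl⟩
          rcases hor with rfl | rfl
          · exact he1 this
          · exact he2 this
        rw [hsig_e]
        simp [hsup', Interaction.app, hsa, hsb, hnofill]
      · have hsig_e : sig' e = Interaction.nop := by
          simp only [hsig']; rw [if_neg hor, if_pos h1]
        have hfill : Fill b := by
          push_neg at hor
          exact ⟨e, hor.1, hor.2, a, b, hab, hsa, hsb, Relation.ReflTransGen.refl⟩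
        rw [hsig_e]
        simp [hsup', Interaction.app, hsa, hfill]
    · -- set
      rw [Set.mem_singleton_iff] at h1
      have hne := hnk e (by rw [h1]; simp)
      have hsb : R.sup b = true := by
        rw [h1] at hc; simpa [Interaction.app] using hc.symm
      have hsig_e : sig' e = Interaction.set := by
        simp only [hsig']
        rw [if_neg hne, if_neg (by rw [h1]; simp)]
        exact h1
      rw [hsig_e]
      simp [hsup', Interaction.app, hsb]
  · -- the atom is solved
    show (sig' k).app (sup' s) = none
    have hsig_k : sig' k = Interaction.inp := by simp only [hsig']; simp
    have hnofill : ¬ Fill s := by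
      rintro ⟨e₀, he1, he2, hd⟩
      exact he2 (hfs e₀ hd)
    rw [hsig_k]
    simp [hsup', Interaction.app, hs0, hnofill]
  · -- at most two inp events
    show {e : E | sig' e = Interaction.inp}.ncard ≤ 2
    have hsub : {e : E | sig' e = Interaction.inp} ⊆ {k, fstar} := by
      intro e he
      simp only [Set.mem_setOf_eq, hsig'] at he
      by_cases hor : e = k ∨ e = fstar
      · exact hor
      · exfalso
        rw [if_neg hor] at he
        by_cases h2 : R.sig e = Interaction.inp
        · rw [if_pos h2] at he; simp at he
        · rw [if_neg h2] at he; exact h2 he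
    calc {e : E | sig' e = Interaction.inp}.ncard
        ≤ ({k, fstar} : Set E).ncard := Set.ncard_le_ncard hsub (Set.toFinite _)
      _ ≤ 2 := by
          apply le_trans (Set.ncard_insert_le _ _)
          simp
end
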